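/- Let t ∈ ℂ with t³ + 27 ≠ 0, let z satisfy z³ + tz + 2 = 0 with z ≠ 0, P = (1,1,z), F = x³+y³+z³+txyz, and let O_P be the conic z_i²(9−6tz_i)(x²+y²) + z_i(15tz_i+18)(xz+yz) − z_i²(t²z_i²+18)xy + (z_i²t²−18tz_i−36)z² with z_i = z. Then the tangent line of O_P at P coincides with the tangent line of the cubic F = 0 at P; i.e. the gradient of O_P at (1,1,z) is proportional to the gradient of F at (1,1,z). -/
import Mathlib


open MvPolynomial

/-- The Hesse pencil cubic `F = x³ + y³ + z³ + t·x·y·z`. -/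
noncomputable def hesseF (t : ℂ) : MvPolynomial (Fin 3) ℂ :=
  X 0 ^ 3 + X 1 ^ 3 + X 2 ^ 3 + C t * X 0 * X 1 * X 2

/-- The osculating conic `O_P` of the Hesse cubic at `P = (1,1,z)` (here `z` is a
root of `z³+tz+2 = 0`):
`z²(9−6tz)(x²+y²) + z(15tz+18)(xz̃+yz̃) − z²(t²z²+18)xy + (z²t²−18tz−36)z̃²`. -/
noncomputable def hesseOP (t z : ℂ) : MvPolynomial (Fin 3) ℂ :=
  C (z ^ 2 * (9 - 6 * t * z)) * (X 0 ^ 2 + X 1 ^ 2)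
    + C (z * (15 * t * z + 18)) * (X 0 * X 2 + X 1 * X 2)
    - C (z ^ 2 * (t ^ 2 * z ^ 2 + 18)) * (X 0 * X 1)
    + C (z ^ 2 * t ^ 2 - 18 * t * z - 36) * X 2 ^ 2

/-- The tangent line of the osculating conic `O_P` at `P = (1,1,z)` coincides with
the tangent line of the cubic `F = 0` at `P`: the gradient of `O_P` at `P` is a
nonzero scalar multiple of the gradient of `F` at `P`. -/
theorem hesse_osculating_conic_tangent (t z : ℂ)
    (ht : t ^ 3 + 27 ≠ 0) (hz : z ^ 3 + t * z + 2 = 0) (hz0 : z ≠ 0) :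
    ∃ c : ℂ, c ≠ 0 ∧ ∀ i : Fin 3,
      eval (![1, 1, z]) (pderiv i (hesseOP t z))
        = c * eval (![1, 1, z]) (pderiv i (hesseF t)) := by
  refine ⟨z ^ 2 * (6 - t * z), ?_, ?_⟩
  · have h6 : 6 - t * z ≠ 0 := by
      intro h
      apply ht
      have key : (t ^ 3 + 27) * z ^ 3 = 0 := by
        linear_combination 27 * hz - (t ^ 2 * z ^ 2 + 6 * t * z + 9) * h
      rcases mul_eq_zero.mp key with h' | h'
      · exact h'
      · exact absurd (pow_eq_zero_iff (by norm_num) |>.mp h') hz0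
    exact mul_ne_zero (pow_ne_zero 2 hz0) h6
  · intro i
    fin_cases i
    · simp [hesseOP, hesseF]; ring
    · simp [hesseOP, hesseF]; ring
    · simp [hesseOP, hesseF]
      linear_combination (3 * t * z ^ 2 - 18 * z) * hz
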